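/- arXiv:1708.01513 — 2 statements merged into one kernel-verified Lean document; each statement's English description precedes it below -/
import Mathlib

section
/- For the ferromagnetic q-state Potts model (q ≥ 2, β > 0) on the subgraph induced by a finite d-dimensional cube V ⊂ ℤ^d, and for the collection D = {B_1,…,B_m} of tilings of V, the spectral gap of the isolated-vertices dynamics is at least that of the isolated-vertices tiled dynamics: λ(I_SW) ≥ λ(I_D). -/
open scoped BigOperators

attribute [local instance] Classical.propDecidable

/-- Vertices of the `d`-dimensional integer lattice `ℤ^d`. -/
abbrev Vtx (d : ℕ) := Fin d → ℤ

/-- Graph (ℓ¹) distance on `ℤ^d`. -/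
def latDist {d : ℕ} (u v : Vtx d) : ℕ := ∑ i, (u i - v i).natAbs

/-- Nearest-neighbor adjacency on `ℤ^d`. -/
def latAdj {d : ℕ} (u v : Vtx d) : Prop := latDist u v = 1

/-- `V` is a `d`-dimensional cube (axis-aligned box with equal sides) in `ℤ^d`. -/
def IsCube {d : ℕ} (V : Finset (Vtx d)) : Prop :=
  ∃ (x : Vtx d) (s : ℕ), ∀ y : Vtx d, y ∈ V ↔ ∀ i, x i ≤ y i ∧ y i < x i + (s : ℤ)

/-- Spin configurations on `V` with spin set `{1,…,q}`. -/
abbrev Conf {d : ℕ} (V : Finset (Vtx d)) (q : ℕ) := {x // x ∈ V} → Fin q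

/-- Unnormalized Potts weight: `exp(β · #{monochromatic edges of σ})`. -/
noncomputable def pottsWeight {d : ℕ} {V : Finset (Vtx d)} (q : ℕ) (β : ℝ)
    (σ : Conf V q) : ℝ :=
  Real.exp (β * ((∑ u : {x // x ∈ V}, ∑ v : {x // x ∈ V},
    if latAdj u.1 v.1 ∧ σ u = σ v then (1 : ℝ) else 0) / 2))

/-- The ferromagnetic `q`-state Potts measure on the subgraph of `ℤ^d` induced by `V`
(with free boundary): `π(σ) ∝ exp(β·|{e ∈ E : σ monochromatic on e}|)`. -/
noncomputable def potts {d : ℕ} (q : ℕ) (β : ℝ) (V : Finset (Vtx d)) : Conf V q → ℝ :=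
  fun σ => pottsWeight q β σ / ∑ σ' : Conf V q, pottsWeight q β σ'

/-- The set `E(σ)` of monochromatic edges of the configuration `σ`. -/
noncomputable def monoEdges {d : ℕ} {V : Finset (Vtx d)} {q : ℕ} (σ : Conf V q) :
    Finset (Sym2 {x // x ∈ V}) :=
  Finset.univ.filter fun e =>
    ∃ u v : {x // x ∈ V}, e = s(u, v) ∧ latAdj u.1 v.1 ∧ σ u = σ v

/-- The graph on `V` with edge set `A`. -/
def graphOf {d : ℕ} {V : Finset (Vtx d)} (A : Finset (Sym2 {x // x ∈ V})) :
    SimpleGraph {x // x ∈ V} where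
  Adj u v := u ≠ v ∧ s(u, v) ∈ A
  symm := by
    constructor
    intro u v h
    exact ⟨h.1.symm, by rw [Sym2.eq_swap]; exact h.2⟩
  loopless := by constructor; intro u h; exact h.1 rfl

/-- `c(A)`: the number of connected components of `(V, A)`. -/
noncomputable def compCount {d : ℕ} {V : Finset (Vtx d)}
    (A : Finset (Sym2 {x // x ∈ V})) : ℕ :=
  Nat.card (graphOf A).ConnectedComponent

/-- The isolated vertices of `(V, A)`. -/
noncomputable def isoVerts {d : ℕ} {V : Finset (Vtx d)}
    (A : Finset (Sym2 {x // x ∈ V})) : Finset {x // x ∈ V} :=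
  Finset.univ.filter fun v => ∀ e ∈ A, v ∉ e

/-- The Swendsen–Wang transition matrix:
`SW(σ,σ') = Σ_{A ⊆ E(σ)∩E(σ')} p^{|A|} (1−p)^{|E(σ)∖A|} q^{−c(A)}`, `p = 1 − e^{−β}`. -/
noncomputable def SWmat {d : ℕ} (q : ℕ) (β : ℝ) (V : Finset (Vtx d)) :
    Matrix (Conf V q) (Conf V q) ℝ :=
  Matrix.of fun σ σ' =>
    ∑ A ∈ (monoEdges σ ∩ monoEdges σ').powerset,
      (1 - Real.exp (-β)) ^ A.card * Real.exp (-β) ^ ((monoEdges σ).card - A.card)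
        * ((q : ℝ) ^ compCount A)⁻¹

/-- The isolated-vertices dynamics `I_SW`: add each monochromatic edge independently with
probability `p = 1 − e^{−β}`, then resample uniformly the spins of the isolated vertices. -/
noncomputable def ISWmat {d : ℕ} (q : ℕ) (β : ℝ) (V : Finset (Vtx d)) :
    Matrix (Conf V q) (Conf V q) ℝ :=
  Matrix.of fun σ σ' =>
    ∑ A ∈ (monoEdges σ).powerset,
      (1 - Real.exp (-β)) ^ A.card * Real.exp (-β) ^ ((monoEdges σ).card - A.card) *
        (if ∀ v : {x // x ∈ V}, v ∉ isoVerts A → σ' v = σ v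
         then ((q : ℝ) ^ (isoVerts A).card)⁻¹ else 0)

/-- Variance w.r.t. `μ`. -/
noncomputable def varMu {Ω : Type*} [Fintype Ω] (μ f : Ω → ℝ) : ℝ :=
  ∑ x, (f x - ∑ y, f y * μ y) ^ 2 * μ x

/-- Inner product in `L²(μ)`. -/
noncomputable def innerMu {Ω : Type*} [Fintype Ω] (μ f g : Ω → ℝ) : ℝ :=
  ∑ x, f x * g x * μ x

/-- Dirichlet form `⟨f, (I − P) f⟩_μ`. -/
noncomputable def dirichletForm {Ω : Type*} [Fintype Ω]
    (μ : Ω → ℝ) (P : Matrix Ω Ω ℝ) (f : Ω → ℝ) : ℝ :=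
  ∑ x, f x * (f x - P.mulVec f x) * μ x

/-- Spectral gap of a reversible positive semidefinite chain, via the variational
characterization `λ(P) = min { ⟨f,(I−P)f⟩_μ / Var_μ(f) : Var_μ(f) ≠ 0 }`. -/
noncomputable def gapD {Ω : Type*} [Fintype Ω] (μ : Ω → ℝ) (P : Matrix Ω Ω ℝ) : ℝ :=
  sInf {r : ℝ | ∃ f : Ω → ℝ, varMu μ f ≠ 0 ∧ r = dirichletForm μ P f / varMu μ f}

/-- The tiling of `V` with offset `x ∈ {0,…,L+2}^d`: the union over `h ∈ ℤ^d` of the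
`d`-dimensional cubes of side length `L−1` (volume `L^d`) centered at `x + h(L+3)`,
intersected with `V`. -/
noncomputable def tile {d : ℕ} (V : Finset (Vtx d)) (L : ℕ) (x : Fin d → Fin (L + 3)) :
    Finset (Vtx d) :=
  V.filter fun y => ∃ h : Fin d → ℤ,
    ∀ i, |y i - (x i : ℤ) - h i * ((L : ℤ) + 3)| ≤ ((L : ℤ) - 1) / 2

/-- The isolated-vertices tiled dynamics `I_D`: add each monochromatic edge independently
with probability `p`, pick a tiling `B_k` uniformly at random among the `(L+3)^d` tilings,
and resample uniformly the spins of the isolated vertices lying in `B_k`. -/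
noncomputable def IDmat {d : ℕ} (q : ℕ) (β : ℝ) (V : Finset (Vtx d)) (L : ℕ) :
    Matrix (Conf V q) (Conf V q) ℝ :=
  Matrix.of fun σ σ' =>
    (((L : ℝ) + 3) ^ d)⁻¹ * ∑ x : Fin d → Fin (L + 3), ∑ A ∈ (monoEdges σ).powerset,
      (1 - Real.exp (-β)) ^ A.card * Real.exp (-β) ^ ((monoEdges σ).card - A.card) *
        (if ∀ v : {y // y ∈ V}, ¬(v ∈ isoVerts A ∧ v.1 ∈ tile V L x) → σ' v = σ v
         then ((q : ℝ) ^ ((isoVerts A).filter fun v => v.1 ∈ tile V L x).card)⁻¹ else 0)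

/-!
Edwards–Sokal coupling: `π(σ)` times the probability that the bond process of `σ` opens exactly
`A ⊆ E(σ)` equals `Z⁻¹ (e^β - 1)^{|A|}`. Hence, for any dynamics that opens bonds and then
resamples the spins on a set `S A` of isolated vertices of `(V, A)`,
`⟨f, P f⟩_π = Z⁻¹ ∑_A (e^β - 1)^{|A|} ⟨g_A, R_{S A} g_A⟩` with `g_A = f · 1[A ⊆ E(·)]`, because
resampling isolated vertices keeps every open edge monochromatic. The resampling operators `R_S`
are orthogonal projections, decreasing in `S`. The tiled dynamics resamples on subsets of the
isolated vertices, so its quadratic form lies between that of `I_SW` and `‖f‖²_π`: its Dirichlet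
form is nonnegative and at most that of `I_SW`, and the variational formula compares the gaps.
-/

namespace Matrix

variable {n : Type*} [Fintype n] {R R' : Matrix n n ℝ}

theorem dotProduct_mulVec_eq_of_isStarProjection (hR : IsStarProjection R) (g : n → ℝ) :
    g ⬝ᵥ (R *ᵥ g) = (R *ᵥ g) ⬝ᵥ (R *ᵥ g) := by
  have hRt : Rᵀ = R := by
    rw [← conjTranspose_eq_transpose_of_trivial]; exact hR.isSelfAdjoint
  conv_lhs => rw [← hR.isIdempotentElem.eq, ← mulVec_mulVec, dotProduct_mulVec, ← hRt,
    vecMul_transpose, hRt]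

theorem dotProduct_mulVec_self_le_of_isStarProjection (hR : IsStarProjection R) (h : n → ℝ) :
    (R *ᵥ h) ⬝ᵥ (R *ᵥ h) ≤ h ⬝ᵥ h := by
  have hproj := dotProduct_mulVec_eq_of_isStarProjection hR h
  have hrest : 0 ≤ (h - R *ᵥ h) ⬝ᵥ (h - R *ᵥ h) := Fintype.sum_nonneg fun _ => mul_self_nonneg _
  simp only [sub_dotProduct, dotProduct_sub, dotProduct_comm (R *ᵥ h) h] at hrest
  linarith

/-- For star projections, `R' * R = R'` says `R' ≤ R` in the Loewner order. -/
theorem dotProduct_mulVec_le_of_mul_eq (hR : IsStarProjection R) (hR' : IsStarProjection R')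
    (hRR' : R' * R = R') (g : n → ℝ) : g ⬝ᵥ (R' *ᵥ g) ≤ g ⬝ᵥ (R *ᵥ g) := by
  rw [dotProduct_mulVec_eq_of_isStarProjection hR', dotProduct_mulVec_eq_of_isStarProjection hR,
    ← hRR', ← mulVec_mulVec]
  exact dotProduct_mulVec_self_le_of_isStarProjection hR' _

end Matrix

section Resampling

open Finset Matrix

variable {X Y : Type*}

def AgreeOff (S : Finset X) (σ τ : X → Y) : Prop := ∀ v ∉ S, τ v = σ v

namespace AgreeOff

variable {S S' : Finset X} {σ τ ρ : X → Y}

theorem symm (h : AgreeOff S σ τ) : AgreeOff S τ σ := fun v hv => (h v hv).symm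

theorem comm : AgreeOff S σ τ ↔ AgreeOff S τ σ := ⟨symm, symm⟩

theorem trans (h₁ : AgreeOff S σ τ) (h₂ : AgreeOff S τ ρ) : AgreeOff S σ ρ :=
  fun v hv => (h₂ v hv).trans (h₁ v hv)

theorem mono (hSS' : S ⊆ S') (h : AgreeOff S σ τ) : AgreeOff S' σ τ :=
  fun v hv => h v fun hS => hv (hSS' hS)

end AgreeOff

theorem agreeOff_empty {σ τ : X → Y} : AgreeOff (∅ : Finset X) σ τ ↔ τ = σ := by
  simp [AgreeOff, funext_iff]

variable [Fintype Y]

/-- Resampling the spins on `S` uniformly at random, as a stochastic matrix. -/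
noncomputable def resampleMat (S : Finset X) : Matrix (X → Y) (X → Y) ℝ :=
  of fun σ τ => if AgreeOff S σ τ then ((Fintype.card Y : ℝ) ^ #S)⁻¹ else 0

theorem resampleMat_transpose (S : Finset X) :
    (resampleMat S : Matrix (X → Y) (X → Y) ℝ)ᵀ = resampleMat S := by
  ext σ τ
  simp [resampleMat, AgreeOff.comm (σ := σ)]

theorem resampleMat_empty : (resampleMat ∅ : Matrix (X → Y) (X → Y) ℝ) = 1 := by
  ext σ τ
  simp [resampleMat, agreeOff_empty, one_apply, eq_comm]

variable [Fintype X] [DecidableEq X]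

theorem card_filter_agreeOff (S : Finset X) (σ : X → Y) :
    #(univ.filter (AgreeOff S σ)) = Fintype.card Y ^ #S := by
  have : univ.filter (AgreeOff S σ) = Fintype.piFinset fun v => if v ∈ S then univ else {σ v} := by
    ext τ
    simp only [mem_filter, mem_univ, true_and, Fintype.mem_piFinset, AgreeOff]
    refine forall_congr' fun v => ?_
    split_ifs with hv <;> simp [hv]
  rw [this, Fintype.card_piFinset]
  simp [apply_ite]

theorem resampleMat_mul_of_subset [Nonempty Y] {S S' : Finset X} (hSS' : S ⊆ S') :
    (resampleMat S' : Matrix (X → Y) (X → Y) ℝ) * resampleMat S = resampleMat S' := by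
  ext σ ρ
  have hcard : ((Fintype.card Y : ℝ) ^ #S) ≠ 0 := by positivity
  simp only [resampleMat, mul_apply, of_apply, ite_zero_mul_ite_zero, ← sum_filter, sum_const,
    nsmul_eq_mul]
  by_cases h : AgreeOff S' σ ρ
  · have : univ.filter (fun τ => AgreeOff S' σ τ ∧ AgreeOff S τ ρ) = univ.filter (AgreeOff S ρ) :=
      filter_congr fun τ _ =>
        ⟨fun hτ => hτ.2.symm, fun hτ => ⟨h.trans (hτ.mono hSS'), hτ.symm⟩⟩
    rw [if_pos h, this, card_filter_agreeOff]
    push_cast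
    field_simp
  · have : univ.filter (fun τ => AgreeOff S' σ τ ∧ AgreeOff S τ ρ) = ∅ :=
      filter_false_of_mem fun τ _ hτ => h (hτ.1.trans (hτ.2.mono hSS'))
    simp [if_neg h, this]

theorem isStarProjection_resampleMat [Nonempty Y] (S : Finset X) :
    IsStarProjection (resampleMat S : Matrix (X → Y) (X → Y) ℝ) where
  isIdempotentElem := resampleMat_mul_of_subset subset_rfl
  isSelfAdjoint := by
    rw [IsSelfAdjoint, star_eq_conjTranspose, conjTranspose_eq_transpose_of_trivial,
      resampleMat_transpose]

end Resampling

section SpectralGap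

open Matrix

variable {Ω : Type*} [Fintype Ω]

theorem dirichletForm_eq_sub (μ : Ω → ℝ) (P : Matrix Ω Ω ℝ) (f : Ω → ℝ) :
    dirichletForm μ P f = innerMu μ f f - innerMu μ f (P *ᵥ f) := by
  simp only [dirichletForm, innerMu, ← Finset.sum_sub_distrib]
  exact Finset.sum_congr rfl fun _ _ => by ring

theorem varMu_nonneg {μ : Ω → ℝ} (hμ : ∀ x, 0 ≤ μ x) (f : Ω → ℝ) : 0 ≤ varMu μ f :=
  Finset.sum_nonneg fun x _ => mul_nonneg (sq_nonneg _) (hμ x)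

theorem gapD_le_gapD {μ : Ω → ℝ} (hμ : ∀ x, 0 ≤ μ x) {P P' : Matrix Ω Ω ℝ}
    (hle : ∀ f, dirichletForm μ P' f ≤ dirichletForm μ P f)
    (hnonneg : ∀ f, 0 ≤ dirichletForm μ P' f) : gapD μ P' ≤ gapD μ P := by
  by_cases hvar : ∃ f, varMu μ f ≠ 0
  · obtain ⟨f₀, hf₀⟩ := hvar
    have hbdd : BddBelow {r | ∃ f, varMu μ f ≠ 0 ∧ r = dirichletForm μ P' f / varMu μ f} :=
      ⟨0, by rintro _ ⟨f, -, rfl⟩; exact div_nonneg (hnonneg f) (varMu_nonneg hμ f)⟩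
    refine le_csInf ⟨_, f₀, hf₀, rfl⟩ ?_
    rintro _ ⟨f, hf, rfl⟩
    exact (csInf_le hbdd ⟨f, hf, rfl⟩).trans
      (div_le_div_of_nonneg_right (hle f) (varMu_nonneg hμ f))
  · simp only [not_exists, not_not] at hvar
    simp [gapD, hvar]

end SpectralGap

section Potts

open Finset Matrix

variable {d : ℕ} {V : Finset (Vtx d)} {q : ℕ}

theorem latAdj_comm {u v : Vtx d} : latAdj u v ↔ latAdj v u := by
  have hsymm : ∀ i, (u i - v i).natAbs = (v i - u i).natAbs := fun i => by
    rw [← Int.natAbs_neg, neg_sub]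
  simp only [latAdj, latDist, hsymm]

theorem not_latAdj_self (u : Vtx d) : ¬ latAdj u u := by
  simp [latAdj, latDist]

def monoGraph (σ : Conf V q) : SimpleGraph {x // x ∈ V} where
  Adj u v := latAdj u.1 v.1 ∧ σ u = σ v
  symm := ⟨fun _ _ h => ⟨latAdj_comm.1 h.1, h.2.symm⟩⟩
  loopless := ⟨fun u h => not_latAdj_self u.1 h.1⟩

theorem monoEdges_eq_edgeFinset (σ : Conf V q) : monoEdges σ = (monoGraph σ).edgeFinset := by
  ext e
  induction e using Sym2.ind with
  | _ u v =>
    rw [SimpleGraph.mem_edgeFinset, SimpleGraph.mem_edgeSet]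
    simp only [monoEdges, mem_filter, mem_univ, true_and, monoGraph]
    constructor
    · rintro ⟨a, b, he, hab, hσ⟩
      rcases Sym2.eq_iff.1 he with ⟨rfl, rfl⟩ | ⟨rfl, rfl⟩
      · exact ⟨hab, hσ⟩
      · exact ⟨latAdj_comm.1 hab, hσ.symm⟩
    · rintro ⟨huv, hσ⟩
      exact ⟨u, v, rfl, huv, hσ⟩

theorem pottsWeight_eq (β : ℝ) (σ : Conf V q) :
    pottsWeight q β σ = Real.exp β ^ #(monoEdges σ) := by
  have hdeg : ∀ u, (∑ v : {x // x ∈ V}, if latAdj u.1 v.1 ∧ σ u = σ v then (1 : ℝ) else 0)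
      = (monoGraph σ).degree u := by
    intro u
    rw [sum_boole, ← SimpleGraph.card_neighborFinset_eq_degree,
      SimpleGraph.neighborFinset_eq_filter]
    norm_cast
    congr!
  simp only [pottsWeight, hdeg]
  rw [← Nat.cast_sum, SimpleGraph.sum_degrees_eq_twice_card_edges, ← monoEdges_eq_edgeFinset,
    ← Real.exp_nat_mul]
  push_cast
  ring_nf

/-- Probability that the bond process of `σ` opens exactly the edges of `A ⊆ E(σ)`. -/
noncomputable def bondProb (β : ℝ) (σ : Conf V q) (A : Finset (Sym2 {x // x ∈ V})) : ℝ :=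
  (1 - Real.exp (-β)) ^ #A * Real.exp (-β) ^ (#(monoEdges σ) - #A)

theorem sum_bondProb (β : ℝ) (σ : Conf V q) :
    ∑ A ∈ (monoEdges σ).powerset, bondProb β σ A = 1 := by
  simp [bondProb, sum_pow_mul_eq_add_pow]

/-- The Edwards–Sokal joint weight of `(σ, A)` depends on `A` only. -/
theorem potts_mul_bondProb (β : ℝ) {σ : Conf V q} {A : Finset (Sym2 {x // x ∈ V})}
    (hA : A ⊆ monoEdges σ) :
    potts q β V σ * bondProb β σ A
      = (∑ τ : Conf V q, pottsWeight q β τ)⁻¹ * (Real.exp β - 1) ^ #A := by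
  obtain ⟨k, hk⟩ := Nat.exists_eq_add_of_le (card_le_card hA)
  have hexp : Real.exp β ≠ 0 := (Real.exp_pos β).ne'
  have hsub : 1 - (Real.exp β)⁻¹ = (Real.exp β - 1) / Real.exp β := by field_simp
  rw [potts, bondProb, pottsWeight_eq, hk, Nat.add_sub_cancel_left, Real.exp_neg, hsub, div_pow,
    inv_pow, pow_add]
  field_simp

theorem subset_monoEdges_of_agreeOff {A : Finset (Sym2 {x // x ∈ V})} {S : Finset {x // x ∈ V}}
    (hS : S ⊆ isoVerts A) {σ τ : Conf V q} (hστ : AgreeOff S σ τ) (hA : A ⊆ monoEdges σ) :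
    A ⊆ monoEdges τ := by
  intro e he
  obtain ⟨u, v, rfl, huv, hσ⟩ := (mem_filter.1 (hA he)).2
  have hnot : ∀ w ∈ s(u, v), w ∉ S := fun w hw hwS => (mem_filter.1 (hS hwS)).2 _ he hw
  refine mem_filter.2 ⟨mem_univ _, u, v, rfl, huv, ?_⟩
  rw [hστ u (hnot u (Sym2.mem_mk_left u v)), hστ v (hnot v (Sym2.mem_mk_right u v)), hσ]

noncomputable def bondRestrict (f : Conf V q → ℝ) (A : Finset (Sym2 {x // x ∈ V}))
    (σ : Conf V q) : ℝ :=
  if A ⊆ monoEdges σ then f σ else 0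

/-- Open each monochromatic edge with probability `1 - e^{-β}`, then resample the spins on `S A`,
where `A` is the set of open edges. -/
noncomputable def bondResample (β : ℝ) (S : Finset (Sym2 {x // x ∈ V}) → Finset {x // x ∈ V}) :
    Matrix (Conf V q) (Conf V q) ℝ :=
  of fun σ τ => ∑ A ∈ (monoEdges σ).powerset, bondProb β σ A * resampleMat (S A) σ τ

theorem bondResample_empty (β : ℝ) :
    bondResample (V := V) (q := q) β (fun _ => ∅) = 1 := by
  ext σ τ
  simp only [bondResample, resampleMat_empty, of_apply, ← sum_mul, sum_bondProb, one_mul,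
    one_apply]
  congr

theorem innerMu_bondResample (β : ℝ) {S : Finset (Sym2 {x // x ∈ V}) → Finset {x // x ∈ V}}
    (hS : ∀ A, S A ⊆ isoVerts A) (f : Conf V q → ℝ) :
    innerMu (potts q β V) f (bondResample β S *ᵥ f)
      = (∑ τ : Conf V q, pottsWeight q β τ)⁻¹ * ∑ A, (Real.exp β - 1) ^ #A *
          (bondRestrict f A ⬝ᵥ (resampleMat (S A) *ᵥ bondRestrict f A)) := by
  have hterm : ∀ σ τ A, (if A ⊆ monoEdges σ then
        potts q β V σ * bondProb β σ A * (f σ * resampleMat (S A) σ τ * f τ) else 0)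
      = (∑ τ : Conf V q, pottsWeight q β τ)⁻¹ * (Real.exp β - 1) ^ #A *
          (bondRestrict f A σ * resampleMat (S A) σ τ * bondRestrict f A τ) := by
    intro σ τ A
    by_cases hA : A ⊆ monoEdges σ
    · by_cases hστ : AgreeOff (S A) σ τ
      · rw [if_pos hA, potts_mul_bondProb β hA, bondRestrict, bondRestrict, if_pos hA,
          if_pos (subset_monoEdges_of_agreeOff (hS A) hστ hA)]
      · simp [hA, resampleMat, hστ]
    · simp [hA, bondRestrict]
  have hpowerset : ∀ σ : Conf V q, ∀ g : Finset (Sym2 {x // x ∈ V}) → ℝ,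
      ∑ A ∈ (monoEdges σ).powerset, g A = ∑ A, if A ⊆ monoEdges σ then g A else 0 :=
    fun σ g => by rw [← sum_filter, filter_subset_univ]
  calc innerMu (potts q β V) f (bondResample β S *ᵥ f)
      = ∑ σ, ∑ τ, ∑ A, if A ⊆ monoEdges σ then
          potts q β V σ * bondProb β σ A * (f σ * resampleMat (S A) σ τ * f τ) else 0 := by
        simp only [innerMu, mulVec, dotProduct, bondResample, of_apply, hpowerset, mul_sum,
          sum_mul]
        refine sum_congr rfl fun σ _ => sum_congr rfl fun τ _ => sum_congr rfl fun A _ => ?_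
        split_ifs <;> ring
    _ = ∑ σ, ∑ τ, ∑ A, (∑ τ : Conf V q, pottsWeight q β τ)⁻¹ * (Real.exp β - 1) ^ #A *
          (bondRestrict f A σ * resampleMat (S A) σ τ * bondRestrict f A τ) := by
        simp only [hterm]
    _ = ∑ A, ∑ σ, ∑ τ, (∑ τ : Conf V q, pottsWeight q β τ)⁻¹ * (Real.exp β - 1) ^ #A *
          (bondRestrict f A σ * resampleMat (S A) σ τ * bondRestrict f A τ) := by
        conv_lhs => enter [2, σ]; rw [sum_comm]
        rw [sum_comm]
    _ = _ := by
        simp only [mulVec, dotProduct, mul_sum]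
        refine sum_congr rfl fun A _ => sum_congr rfl fun σ _ => sum_congr rfl fun τ _ => ?_
        ring

theorem innerMu_bondResample_le_of_subset (hq : 0 < q) {β : ℝ} (hβ : 0 ≤ β)
    {S S' : Finset (Sym2 {x // x ∈ V}) → Finset {x // x ∈ V}} (hSS' : ∀ A, S A ⊆ S' A)
    (hS' : ∀ A, S' A ⊆ isoVerts A) (f : Conf V q → ℝ) :
    innerMu (potts q β V) f (bondResample β S' *ᵥ f)
      ≤ innerMu (potts q β V) f (bondResample β S *ᵥ f) := by
  have : Nonempty (Fin q) := Fin.pos_iff_nonempty.1 hq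
  have hZ : 0 ≤ ∑ τ : Conf V q, pottsWeight q β τ :=
    sum_nonneg fun τ _ => (Real.exp_pos _).le
  have hexp : 0 ≤ Real.exp β - 1 := by linarith [Real.one_le_exp hβ]
  rw [innerMu_bondResample β hS', innerMu_bondResample β fun A => (hSS' A).trans (hS' A)]
  refine mul_le_mul_of_nonneg_left (sum_le_sum fun A _ => ?_) (inv_nonneg.2 hZ)
  refine mul_le_mul_of_nonneg_left ?_ (pow_nonneg hexp _)
  exact dotProduct_mulVec_le_of_mul_eq (isStarProjection_resampleMat _)
    (isStarProjection_resampleMat _) (resampleMat_mul_of_subset (hSS' A)) _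

theorem ISWmat_eq_bondResample (β : ℝ) : ISWmat q β V = bondResample β isoVerts := by
  ext σ τ
  simp [ISWmat, bondResample, bondProb, resampleMat, AgreeOff, mul_assoc]

noncomputable def tileIsoVerts (L : ℕ) (x : Fin d → Fin (L + 3))
    (A : Finset (Sym2 {x // x ∈ V})) : Finset {x // x ∈ V} :=
  (isoVerts A).filter fun v => v.1 ∈ tile V L x

theorem IDmat_apply_eq_expect (β : ℝ) (L : ℕ) (σ τ : Conf V q) :
    IDmat q β V L σ τ = 𝔼 x, bondResample β (tileIsoVerts L x) σ τ := by
  simp [IDmat, bondResample, bondProb, resampleMat, AgreeOff, tileIsoVerts,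
    Fintype.expect_eq_sum_div_card, mul_assoc, div_eq_inv_mul]

theorem innerMu_IDmat (β : ℝ) (L : ℕ) (f : Conf V q → ℝ) :
    innerMu (potts q β V) f (IDmat q β V L *ᵥ f)
      = 𝔼 x, innerMu (potts q β V) f (bondResample β (tileIsoVerts L x) *ᵥ f) := by
  simp only [innerMu, mulVec, dotProduct, IDmat_apply_eq_expect, expect_mul, mul_expect,
    ← expect_sum_comm]

theorem innerMu_ISWmat_le_IDmat (hq : 0 < q) {β : ℝ} (hβ : 0 ≤ β) (L : ℕ) (f : Conf V q → ℝ) :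
    innerMu (potts q β V) f (ISWmat q β V *ᵥ f) ≤ innerMu (potts q β V) f (IDmat q β V L *ᵥ f) := by
  rw [ISWmat_eq_bondResample, innerMu_IDmat]
  exact le_expect univ_nonempty fun x _ =>
    innerMu_bondResample_le_of_subset hq hβ (fun A => filter_subset _ _) (fun A => subset_rfl) f

theorem innerMu_IDmat_le (hq : 0 < q) {β : ℝ} (hβ : 0 ≤ β) (L : ℕ) (f : Conf V q → ℝ) :
    innerMu (potts q β V) f (IDmat q β V L *ᵥ f) ≤ innerMu (potts q β V) f f := by
  rw [innerMu_IDmat]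
  refine expect_le univ_nonempty fun x _ => ?_
  simpa [bondResample_empty] using innerMu_bondResample_le_of_subset hq hβ
    (S := fun _ => ∅) (S' := tileIsoVerts L x) (fun A => empty_subset _) (fun A => filter_subset _ _) f

theorem potts_nonneg (β : ℝ) (σ : Conf V q) : 0 ≤ potts q β V σ :=
  div_nonneg (Real.exp_pos _).le (sum_nonneg fun _ _ => (Real.exp_pos _).le)

end Potts

theorem statement9_general (d q : ℕ) (β : ℝ) (hq : 2 ≤ q) (hβ : 0 < β)
    (V : Finset (Vtx d)) (L : ℕ) :
    gapD (potts q β V) (IDmat q β V L) ≤ gapD (potts q β V) (ISWmat q β V) := by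
  have hq0 : 0 < q := by omega
  refine gapD_le_gapD (potts_nonneg β) (fun f => ?_) (fun f => ?_) <;>
    simp only [dirichletForm_eq_sub]
  · linarith [innerMu_ISWmat_le_IDmat hq0 hβ.le L f]
  · linarith [innerMu_IDmat_le hq0 hβ.le L f]

/-- For the ferromagnetic `q`-state Potts model on a cube of `ℤ^d`, the isolated-vertices
dynamics has spectral gap at least that of the isolated-vertices tiled dynamics:
`λ(I_SW) ≥ λ(I_D)`. -/
theorem statement9 (d q : ℕ) (β : ℝ) (hq : 2 ≤ q) (hβ : 0 < β)
    (V : Finset (Vtx d)) (hV : IsCube V) (L : ℕ) (hL : Odd L) :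
    gapD (potts q β V) (IDmat q β V L) ≤ gapD (potts q β V) (ISWmat q β V) :=
  statement9_general d q β hq hβ V L
end

section
/- Let V and S be finite sets, Ω = S^V, and μ a fully supported probability measure on Ω. Let U_1,…,U_t ⊆ V with U = ∪_i U_i, and suppose the heat-bath update matrices commute pairwise: K_{U_i} K_{U_j} = K_{U_j} K_{U_i} for all i ≠ j. Then for every function f : Ω → ℝ, E_U(f,f) ≤ Σ_{i=1}^t E_{U_i}(f,f). -/
open scoped BigOperators

attribute [local instance] Classical.propDecidable

/-- Heat-bath update matrix on configurations `V → S` for the block `A ⊆ V`: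
`K_A(σ,σ') = 1(σ = σ' off A) · μ(σ'(A) | σ(V∖A))`. -/
noncomputable def hbK {V S : Type*} [Fintype V] [DecidableEq V] [Fintype S]
    (μ : (V → S) → ℝ) (A : Finset V) : Matrix (V → S) (V → S) ℝ :=
  Matrix.of fun σ σ' =>
    if ∀ v, v ∉ A → σ v = σ' v then
      μ σ' / ∑ η : V → S, if ∀ v, v ∉ A → η v = σ v then μ η else 0
    else 0

/-- Dirichlet form of the heat-bath update: `E_A(f,f) = ⟨f, (I − K_A) f⟩_μ`. -/
noncomputable def dirForm {V S : Type*} [Fintype V] [DecidableEq V] [Fintype S]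
    (μ : (V → S) → ℝ) (A : Finset V) (f : (V → S) → ℝ) : ℝ :=
  ∑ σ, f σ * (f σ - (hbK μ A).mulVec f σ) * μ σ

section aux
variable {V S : Type*} [Fintype V] [DecidableEq V] [Fintype S]

/-- weighted inner product -/
noncomputable def ip (μ f g : (V → S) → ℝ) : ℝ := ∑ σ, f σ * g σ * μ σ

/-- heat-bath operator -/
noncomputable def hbT (μ : (V → S) → ℝ) (A : Finset V) (f : (V → S) → ℝ) : (V → S) → ℝ :=
  (hbK μ A).mulVec f

/-- normalizing constant -/
noncomputable def hbZ (μ : (V → S) → ℝ) (A : Finset V) (σ : V → S) : ℝ :=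
  ∑ η : V → S, if ∀ v, v ∉ A → η v = σ v then μ η else 0

variable {μ : (V → S) → ℝ} {A : Finset V}

lemma hbK_apply (σ τ : V → S) :
    hbK μ A σ τ = if ∀ v, v ∉ A → σ v = τ v then μ τ / hbZ μ A σ else 0 := rfl

lemma hbZ_pos (hpos : ∀ σ, 0 < μ σ) (σ : V → S) : 0 < hbZ μ A σ := by
  unfold hbZ
  apply Finset.sum_pos' (fun η _ => by split <;> [exact (hpos η).le; rfl])
  exact ⟨σ, Finset.mem_univ σ, by simp [(hpos σ)]⟩

lemma hbZ_congr {σ τ : V → S} (h : ∀ v, v ∉ A → σ v = τ v) : hbZ μ A σ = hbZ μ A τ := by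
  unfold hbZ
  refine Finset.sum_congr rfl fun η _ => ?_
  congr 1
  simp only [eq_iff_iff]
  constructor
  · intro h' v hv; rw [h' v hv, ← h v hv]
  · intro h' v hv; rw [h' v hv, h v hv]

lemma hbT_apply (g : (V → S) → ℝ) (σ : V → S) :
    hbT μ A g σ = ∑ τ, hbK μ A σ τ * g τ := by
  simp [hbT, Matrix.mulVec, dotProduct]

lemma hbK_rowsum (hpos : ∀ σ, 0 < μ σ) (σ : V → S) : ∑ τ, hbK μ A σ τ = 1 := by
  have hz := hbZ_pos (A := A) hpos σ
  have : ∑ τ, hbK μ A σ τ = (∑ τ : V → S, if ∀ v, v ∉ A → τ v = σ v then μ τ else 0) / hbZ μ A σ := by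
    rw [Finset.sum_div]
    refine Finset.sum_congr rfl fun τ _ => ?_
    rw [hbK_apply]
    by_cases h : ∀ v, v ∉ A → σ v = τ v
    · rw [if_pos h, if_pos (fun v hv => (h v hv).symm)]
    · rw [if_neg h, if_neg (fun h' => h fun v hv => (h' v hv).symm), zero_div]
  rw [this]
  exact div_self (ne_of_gt hz)

lemma hbK_rev (hpos : ∀ σ, 0 < μ σ) (σ τ : V → S) :
    μ σ * hbK μ A σ τ = μ τ * hbK μ A τ σ := by
  rw [hbK_apply, hbK_apply]
  by_cases h : ∀ v, v ∉ A → σ v = τ v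
  · rw [if_pos h, if_pos (fun v hv => (h v hv).symm), hbZ_congr h]
    ring
  · rw [if_neg h, if_neg (fun h' => h fun v hv => (h' v hv).symm)]
    ring

lemma hbT_congr (g : (V → S) → ℝ) {σ σ' : V → S} (h : ∀ v, v ∉ A → σ v = σ' v) :
    hbT μ A g σ = hbT μ A g σ' := by
  rw [hbT_apply, hbT_apply]
  refine Finset.sum_congr rfl fun τ _ => ?_
  rw [hbK_apply, hbK_apply, hbZ_congr h]
  have hc : (∀ v, v ∉ A → σ v = τ v) ↔ (∀ v, v ∉ A → σ' v = τ v) := by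
    constructor
    · intro h' v hv; rw [← h v hv]; exact h' v hv
    · intro h' v hv; rw [h v hv]; exact h' v hv
  rw [if_congr hc rfl rfl]

lemma hbT_fix (hpos : ∀ σ, 0 < μ σ) {g : (V → S) → ℝ}
    (hg : ∀ σ τ : V → S, (∀ v, v ∉ A → σ v = τ v) → g σ = g τ) :
    hbT μ A g = g := by
  funext σ
  rw [hbT_apply]
  have : ∀ τ : V → S, hbK μ A σ τ * g τ = hbK μ A σ τ * g σ := by
    intro τ
    by_cases h : ∀ v, v ∉ A → σ v = τ v
    · rw [hg σ τ h]
    · rw [hbK_apply, if_neg h, zero_mul, zero_mul]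
  rw [Finset.sum_congr rfl (fun τ _ => this τ), ← Finset.sum_mul, hbK_rowsum hpos, one_mul]

lemma hbT_idem (hpos : ∀ σ, 0 < μ σ) (g : (V → S) → ℝ) :
    hbT μ A (hbT μ A g) = hbT μ A g :=
  hbT_fix hpos fun _ _ h => hbT_congr g h

lemma ip_adj (hpos : ∀ σ, 0 < μ σ) (f g : (V → S) → ℝ) :
    ip μ (hbT μ A f) g = ip μ f (hbT μ A g) := by
  unfold ip
  simp only [hbT_apply]
  have L : ∀ σ : V → S, (∑ τ : V → S, hbK μ A σ τ * f τ) * g σ * μ σ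
      = ∑ τ : V → S, f τ * (hbK μ A τ σ * g σ) * μ τ := by
    intro σ
    rw [Finset.sum_mul, Finset.sum_mul]
    refine Finset.sum_congr rfl fun τ _ => ?_
    linear_combination f τ * g σ * hbK_rev (A := A) hpos σ τ
  calc ∑ σ : V → S, (∑ τ : V → S, hbK μ A σ τ * f τ) * g σ * μ σ
      = ∑ σ : V → S, ∑ τ : V → S, f τ * (hbK μ A τ σ * g σ) * μ τ :=
        Finset.sum_congr rfl fun σ _ => L σ
    _ = ∑ τ : V → S, ∑ σ : V → S, f τ * (hbK μ A τ σ * g σ) * μ τ := Finset.sum_comm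
    _ = ∑ τ : V → S, f τ * (∑ σ : V → S, hbK μ A τ σ * g σ) * μ τ := by
        refine Finset.sum_congr rfl fun τ _ => ?_
        rw [Finset.mul_sum, Finset.sum_mul]


lemma ip_comm (f g : (V → S) → ℝ) : ip μ f g = ip μ g f := by
  unfold ip; exact Finset.sum_congr rfl fun σ _ => by ring

lemma ip_nonneg (hpos : ∀ σ, 0 < μ σ) (f : (V → S) → ℝ) : 0 ≤ ip μ f f :=
  Finset.sum_nonneg fun σ _ => by nlinarith [mul_self_nonneg (f σ), (hpos σ).le]

lemma ip_cs (hpos : ∀ σ, 0 < μ σ) (f g : (V → S) → ℝ) :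
    (ip μ f g) ^ 2 ≤ ip μ f f * ip μ g g := by
  have h := Finset.sum_mul_sq_le_sq_mul_sq Finset.univ
    (fun σ => f σ * Real.sqrt (μ σ)) (fun σ => g σ * Real.sqrt (μ σ))
  have e : ∀ (a b : (V → S) → ℝ), (∑ σ, (a σ * Real.sqrt (μ σ)) * (b σ * Real.sqrt (μ σ))) = ip μ a b := by
    intro a b
    refine Finset.sum_congr rfl fun σ _ => ?_
    have hs : Real.sqrt (μ σ) * Real.sqrt (μ σ) = μ σ := Real.mul_self_sqrt (hpos σ).le
    calc a σ * Real.sqrt (μ σ) * (b σ * Real.sqrt (μ σ))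
        = a σ * b σ * (Real.sqrt (μ σ) * Real.sqrt (μ σ)) := by ring
      _ = a σ * b σ * μ σ := by rw [hs]
  have e2 : ∀ (a : (V → S) → ℝ), (∑ σ, (a σ * Real.sqrt (μ σ)) ^ 2) = ip μ a a := by
    intro a
    rw [← e a a]
    exact Finset.sum_congr rfl fun σ _ => by ring
  calc (ip μ f g) ^ 2 = (∑ σ, (f σ * Real.sqrt (μ σ)) * (g σ * Real.sqrt (μ σ))) ^ 2 := by rw [e]
    _ ≤ (∑ σ, (f σ * Real.sqrt (μ σ)) ^ 2) * ∑ σ, (g σ * Real.sqrt (μ σ)) ^ 2 := h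
    _ = ip μ f f * ip μ g g := by rw [e2, e2]

lemma ip_contract (hpos : ∀ σ, 0 < μ σ) (g : (V → S) → ℝ) :
    ip μ (hbT μ A g) (hbT μ A g) ≤ ip μ g g := by
  set a := ip μ (hbT μ A g) (hbT μ A g) with ha
  have h1 : a = ip μ g (hbT μ A g) := by
    rw [ha, ip_adj hpos, hbT_idem hpos, ip_comm, ip_adj hpos]
  have h2 : (ip μ g (hbT μ A g)) ^ 2 ≤ ip μ g g * a := ip_cs hpos _ _
  rw [← h1] at h2
  have hb : 0 ≤ ip μ g g := ip_nonneg hpos g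
  have h0 : 0 ≤ a := ha ▸ ip_nonneg hpos (hbT μ A g)
  rcases eq_or_lt_of_le h0 with h0 | h0
  · linarith
  · nlinarith

lemma ip_sub_left (f g h : (V → S) → ℝ) :
    ip μ (fun σ => f σ - g σ) h = ip μ f h - ip μ g h := by
  unfold ip; rw [← Finset.sum_sub_distrib]
  exact Finset.sum_congr rfl fun σ _ => by ring

lemma ip_sub_right (f g h : (V → S) → ℝ) :
    ip μ f (fun σ => g σ - h σ) = ip μ f g - ip μ f h := by
  unfold ip; rw [← Finset.sum_sub_distrib]
  exact Finset.sum_congr rfl fun σ _ => by ring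

lemma hbT_sub (f g : (V → S) → ℝ) :
    hbT μ A (fun σ => f σ - g σ) = fun σ => hbT μ A f σ - hbT μ A g σ := by
  funext σ
  simp only [hbT_apply, ← Finset.sum_sub_distrib]
  exact Finset.sum_congr rfl fun τ _ => by ring

lemma dirForm_eq (f : (V → S) → ℝ) :
    dirForm μ A f = ip μ f f - ip μ f (hbT μ A f) := by
  unfold dirForm ip hbT
  rw [← Finset.sum_sub_distrib]
  exact Finset.sum_congr rfl fun σ _ => by ring

lemma dirForm_eq' (hpos : ∀ σ, 0 < μ σ) (f : (V → S) → ℝ) :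
    dirForm μ A f = ip μ (fun σ => f σ - hbT μ A f σ) (fun σ => f σ - hbT μ A f σ) := by
  rw [dirForm_eq, ip_sub_left, ip_sub_right, ip_sub_right]
  have h1 : ip μ (hbT μ A f) (hbT μ A f) = ip μ f (hbT μ A f) := by
    rw [ip_adj hpos, hbT_idem hpos]
  have h2 : ip μ (hbT μ A f) f = ip μ f (hbT μ A f) := ip_comm _ _
  linarith


lemma hbT_comm {B : Finset V} (h : hbK μ A * hbK μ B = hbK μ B * hbK μ A)
    (g : (V → S) → ℝ) : hbT μ A (hbT μ B g) = hbT μ B (hbT μ A g) := by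
  unfold hbT
  rw [Matrix.mulVec_mulVec, Matrix.mulVec_mulVec, h]

/-- chain of heat-bath updates -/
noncomputable def chain (μ : (V → S) → ℝ) {t : ℕ} (Us : Fin t → Finset V)
    (f : (V → S) → ℝ) : ℕ → ((V → S) → ℝ)
  | 0 => f
  | n + 1 => if h : n < t then hbT μ (Us ⟨n, h⟩) (chain μ Us f n) else chain μ Us f n

lemma chain_succ {t : ℕ} (Us : Fin t → Finset V) (f : (V → S) → ℝ) {n : ℕ} (hn : n < t) :
    chain μ Us f (n + 1) = hbT μ (Us ⟨n, hn⟩) (chain μ Us f n) := by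
  simp [chain, hn]

lemma chain_fixed (hpos : ∀ σ, 0 < μ σ) {t : ℕ} (Us : Fin t → Finset V)
    (hcomm : ∀ i j, i ≠ j → hbK μ (Us i) * hbK μ (Us j) = hbK μ (Us j) * hbK μ (Us i))
    (f : (V → S) → ℝ) (i : Fin t) :
    ∀ n, i.val < n → n ≤ t → hbT μ (Us i) (chain μ Us f n) = chain μ Us f n := by
  intro n
  induction n with
  | zero => omega
  | succ n ihn =>
    intro hlt hle
    have hn : n < t := by omega
    rw [chain_succ Us f hn]
    rcases Nat.lt_or_ge i.val n with h | h
    · rw [hbT_comm (hcomm i ⟨n, hn⟩ (Fin.ne_of_val_ne (Nat.ne_of_lt h))),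
        ihn h (by omega)]
    · have hieq : i = ⟨n, hn⟩ := Fin.ext (show i.1 = n by omega)
      rw [hieq, hbT_idem hpos]

lemma chain_contract (hpos : ∀ σ, 0 < μ σ) {t : ℕ} (Us : Fin t → Finset V)
    (h : (V → S) → ℝ) : ∀ n, ip μ (chain μ Us h n) (chain μ Us h n) ≤ ip μ h h := by
  intro n
  induction n with
  | zero => exact le_rfl
  | succ n ihn =>
    by_cases hn : n < t
    · rw [chain_succ Us h hn]
      exact le_trans (ip_contract hpos _) ihn
    · have : chain μ Us h (n + 1) = chain μ Us h n := by simp [chain, hn]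
      rw [this]; exact ihn

lemma sup_depends {t : ℕ} (Us : Fin t → Finset V) (G : (V → S) → ℝ)
    (h : ∀ i : Fin t, ∀ σ τ : V → S, (∀ v, v ∉ Us i → σ v = τ v) → G σ = G τ)
    (σ τ : V → S) (hst : ∀ v, v ∉ Finset.univ.sup Us → σ v = τ v) : G σ = G τ := by
  set ρ : ℕ → (V → S) := fun k v => if ∃ i : Fin t, i.val < k ∧ v ∈ Us i then τ v else σ v with hρ
  have h0 : ρ 0 = σ := by funext v; simp [hρ]
  have hstep : ∀ k, (hk : k < t) → G (ρ (k + 1)) = G (ρ k) := by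
    intro k hk
    refine h ⟨k, hk⟩ (ρ (k + 1)) (ρ k) ?_
    intro v hv
    have hiff : (∃ i : Fin t, i.val < k + 1 ∧ v ∈ Us i) ↔ (∃ i : Fin t, i.val < k ∧ v ∈ Us i) := by
      constructor
      · rintro ⟨i, hik, hvi⟩
        rcases Nat.lt_or_ge i.val k with h' | h'
        · exact ⟨i, h', hvi⟩
        · have hieq : i = ⟨k, hk⟩ := Fin.ext (show i.1 = k by omega)
          exact absurd (hieq ▸ hvi) hv
      · rintro ⟨i, hik, hvi⟩; exact ⟨i, by omega, hvi⟩
    simp only [hρ]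
    rw [if_congr hiff rfl rfl]
  have hall : ∀ k, k ≤ t → G (ρ k) = G σ := by
    intro k
    induction k with
    | zero => intro _; rw [h0]
    | succ k ih => intro hk; rw [hstep k (by omega), ih (by omega)]
  have ht : ρ t = τ := by
    funext v
    by_cases hvU : ∃ i : Fin t, i.val < t ∧ v ∈ Us i
    · simp only [hρ]; rw [if_pos hvU]
    · have hv' : v ∉ Finset.univ.sup Us := by
        intro hmem
        rw [Finset.mem_sup] at hmem
        obtain ⟨i, _, hvi⟩ := hmem
        exact hvU ⟨i, i.isLt, hvi⟩
      simp only [hρ]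
      rw [if_neg hvU]
      exact hst v hv'
  rw [← ht]
  exact (hall t le_rfl).symm

lemma proj_diff (hpos : ∀ σ, 0 < μ σ) (h : (V → S) → ℝ) :
    ip μ (fun σ => h σ - hbT μ A h σ) (fun σ => h σ - hbT μ A h σ)
      = ip μ h h - ip μ (hbT μ A h) (hbT μ A h) := by
  rw [ip_sub_left, ip_sub_right, ip_sub_right]
  have e1 : ip μ (hbT μ A h) (hbT μ A h) = ip μ h (hbT μ A h) := by
    rw [ip_adj hpos, hbT_idem hpos]
  have e2 : ip μ (hbT μ A h) h = ip μ h (hbT μ A h) := ip_comm _ _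
  linarith

end aux

/-- Subadditivity (tensorization) of the Dirichlet form over commuting heat-bath updates:
if the `K_{U_i}` commute pairwise and `U = ∪ᵢ Uᵢ` then
`E_U(f,f) ≤ Σᵢ E_{Uᵢ}(f,f)`. -/


theorem statement15 {V S : Type*} [Fintype V] [DecidableEq V] [Fintype S]
    (μ : (V → S) → ℝ) (hpos : ∀ σ, 0 < μ σ) (hsum : ∑ σ, μ σ = 1)
    (t : ℕ) (Us : Fin t → Finset V)
    (hcomm : ∀ i j, i ≠ j → hbK μ (Us i) * hbK μ (Us j) = hbK μ (Us j) * hbK μ (Us i))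
    (f : (V → S) → ℝ) :
    dirForm μ (Finset.univ.sup Us) f ≤ ∑ i, dirForm μ (Us i) f := by
  set U := Finset.univ.sup Us with hU
  set g : ℕ → ((V → S) → ℝ) := chain μ Us f with hg
  have hfix := chain_fixed hpos Us hcomm f
  -- g t is fixed by the big update
  have hdep : ∀ σ τ : V → S, (∀ v, v ∉ U → σ v = τ v) → g t σ = g t τ := by
    refine sup_depends Us (g t) ?_
    intro i σ τ hστ
    have hf := hfix i t i.isLt le_rfl
    rw [hg, ← hf]
    exact hbT_congr (chain μ Us f t) hστ
  have hUfix : hbT μ U (g t) = g t := hbT_fix hpos hdep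
  -- ip (g n) (g t) = ip f (g t)
  have hipn : ∀ n, n ≤ t → ip μ (g n) (g t) = ip μ f (g t) := by
    intro n
    induction n with
    | zero => intro _; rfl
    | succ n ihn =>
      intro hn1
      have hn : n < t := by omega
      rw [hg, chain_succ Us f hn, ip_adj hpos, ← hg, hfix ⟨n, hn⟩ t hn le_rfl, ihn (by omega)]
  set b := ip μ (g t) (g t) with hb
  set a := ip μ (hbT μ U f) (hbT μ U f) with ha
  have hbf : b = ip μ (hbT μ U f) (g t) := by
    rw [ip_adj hpos, hUfix, hb, hipn t le_rfl, ip_comm]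
  have hba : b ≤ a := by
    have hcs : (ip μ (hbT μ U f) (g t)) ^ 2 ≤ a * b := ip_cs hpos _ _
    rw [← hbf] at hcs
    have hb0 : 0 ≤ b := ip_nonneg hpos _
    have ha0 : 0 ≤ a := ip_nonneg hpos _
    rcases eq_or_lt_of_le hb0 with h0 | h0
    · linarith
    · nlinarith
  -- telescoping bound
  set Ds : ℕ → ℝ := fun k => if hk : k < t then dirForm μ (Us ⟨k, hk⟩) f else 0 with hDs
  have hterm : ∀ k ∈ Finset.range t,
      ip μ (g k) (g k) - ip μ (g (k + 1)) (g (k + 1)) ≤ Ds k := by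
    intro k hk'
    have hk : k < t := Finset.mem_range.mp hk'
    set df : (V → S) → ℝ := fun σ => f σ - hbT μ (Us ⟨k, hk⟩) f σ with hdf
    have hD : ∀ n, n ≤ k →
        (fun σ => g n σ - hbT μ (Us ⟨k, hk⟩) (g n) σ) = chain μ Us df n := by
      intro n
      induction n with
      | zero => intro _; rfl
      | succ n ihn =>
        intro hn1
        have hnk : n < k := by omega
        have hn : n < t := by omega
        have hne : (⟨k, hk⟩ : Fin t) ≠ ⟨n, hn⟩ := Fin.ne_of_val_ne (by simpa using (Nat.ne_of_gt hnk))
        rw [hg, chain_succ Us f hn, chain_succ Us df hn, ← ihn (by omega),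
          hbT_sub, ← hg]
        funext σ
        have hcomm' : hbT μ (Us ⟨k, hk⟩) (hbT μ (Us ⟨n, hn⟩) (g n))
            = hbT μ (Us ⟨n, hn⟩) (hbT μ (Us ⟨k, hk⟩) (g n)) :=
          hbT_comm (hcomm _ _ hne) (g n)
        rw [hcomm']
    have hsucc : g (k + 1) = hbT μ (Us ⟨k, hk⟩) (g k) := by
      rw [hg, chain_succ Us f hk]
    have e1 : ip μ (g k) (g k) - ip μ (g (k + 1)) (g (k + 1))
        = ip μ (chain μ Us df k) (chain μ Us df k) := by
      rw [hsucc, ← proj_diff hpos, hD k le_rfl]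
    rw [e1]
    simp only [hDs, dif_pos hk]
    calc ip μ (chain μ Us df k) (chain μ Us df k) ≤ ip μ df df := chain_contract hpos Us df k
      _ = dirForm μ (Us ⟨k, hk⟩) f := (dirForm_eq' hpos f).symm
  have htel : ∑ k ∈ Finset.range t,
      (ip μ (g k) (g k) - ip μ (g (k + 1)) (g (k + 1))) = ip μ f f - b := by
    rw [Finset.sum_range_sub' (fun k => ip μ (g k) (g k)) t]
    rfl
  have hsum2 : ∑ i : Fin t, dirForm μ (Us i) f = ∑ k ∈ Finset.range t, Ds k := by
    rw [← Fin.sum_univ_eq_sum_range Ds t]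
    refine Finset.sum_congr rfl fun i _ => ?_
    rw [hDs]
    simp only [dif_pos i.isLt, Fin.eta]
  have hmain : ip μ f f - b ≤ ∑ i : Fin t, dirForm μ (Us i) f := by
    rw [hsum2, ← htel]
    exact Finset.sum_le_sum hterm
  have hdir : dirForm μ U f = ip μ f f - a := by
    rw [dirForm_eq, ha, ip_adj hpos, hbT_idem hpos]
  linarith
end
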